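/- For elements x, y in a Coxeter group W, the Demazure product x * y can be written as u'y for some u' ≤ x with ℓ(x * y) = ℓ(u') + ℓ(y), and also as xv' for some v' ≤ y with ℓ(x * y) = ℓ(x) + ℓ(v'). -/

import Mathlib

/-!
Fold a reduced word `ω` of `y` greedily onto `x`, multiplying by the next letter only when this
raises the length. The result is `x * v` with `v` the product of a subword of `ω`, so `v ≤ y` and
lengths add; in particular it lies in `{u * v | u ≤ x, v ≤ y}` and is below `m`. Conversely, the
lifting property of the Bruhat order puts every `u * v` with `u ≤ x` and `v` a subword product of
`ω` below the fold, so `m` equals the fold. The decomposition `m = u * y` follows by inverting.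

The lifting property is proved for the chain definition of the Bruhat order, which agrees with the
subword definition by the strong exchange property; that in turn comes from the parity
representation of `W` on `W × ZMod 2`.
-/

/-- The Bruhat order on a Coxeter group, defined via the subword property:
`u ≤ v` iff some reduced word for `v` contains a subword whose product is `u`. -/
def bruhatLE {B W : Type*} [Group W] {M : CoxeterMatrix B} (cs : CoxeterSystem M W)
    (u v : W) : Prop :=
  ∃ l : List B, cs.IsReduced l ∧ cs.wordProd l = v ∧
    ∃ l' : List B, l'.Sublist l ∧ cs.wordProd l' = u

open List

namespace CoxeterSystem

variable {B W : Type*} [Group W] {M : CoxeterMatrix B} (cs : CoxeterSystem M W)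

local prefix:100 "s " => cs.simple
local prefix:100 "π " => cs.wordProd
local prefix:100 "ℓ " => cs.length
local prefix:100 "lis " => cs.leftInvSeq

theorem prod_map_alternatingWord_two_mul {G : Type*} [Monoid G] (f : B → G) (i j : B) (m : ℕ) :
    ((alternatingWord i j (2 * m)).map f).prod = (f i * f j) ^ m := by
  induction m with
  | zero => simp [alternatingWord]
  | succ m ih =>
    rw [show 2 * (m + 1) = 2 * m + 1 + 1 by ring, alternatingWord_succ', alternatingWord_succ',
      if_neg (by simp [parity_simps]), if_pos (even_two_mul m)]
    simp [ih, pow_succ', mul_assoc]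

theorem wordProd_alternatingWord_add_two_mul (i j : B) (n : ℕ) :
    π (alternatingWord i j (n + 2 * M i j)) = π (alternatingWord i j n) := by
  simp only [prod_alternatingWord_eq_mul_pow, Nat.even_add, even_two_mul, iff_true,
    show (n + 2 * M i j) / 2 = n / 2 + M i j by omega, pow_add, simple_mul_simple_pow, mul_one]

theorem exists_leftInvSeq_alternatingWord_eq_append_self (i j : B) :
    ∃ L : List W, lis (alternatingWord i j (2 * M i j)) = L ++ L := by
  refine ⟨(lis (alternatingWord i j (2 * M i j))).take (M i j), ext_getElem (by simp; omega) ?_⟩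
  intro k hk _
  rw [getElem_append]
  split_ifs with hkM
  · simp
  · simp only [getElem_take, length_take, length_leftInvSeq, length_alternatingWord] at hk hkM ⊢
    rw [getElem_leftInvSeq_alternatingWord cs i j _ k hk,
      getElem_leftInvSeq_alternatingWord cs i j _ _ (by omega)]
    conv_rhs => rw [← wordProd_alternatingWord_add_two_mul cs j i, M.symmetric j i]
    congr 2
    omega

section ParityRepresentation

theorem conj_simple_eq_simple_iff {i : B} {t : W} : MulAut.conj (s i) t = s i ↔ t = s i :=
  (MulAut.conj (s i)).injective.eq_iff' (by simp)

open scoped Classical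

/-- The image of `s i` under the parity representation `parityRep`. -/
noncomputable def parityGen (i : B) : Equiv.Perm (W × ZMod 2) :=
  Function.Involutive.toPerm
    (fun p => (MulAut.conj (s i) p.1, p.2 + if p.1 = s i then 1 else 0)) <| by
      rintro ⟨t, ε⟩
      refine Prod.ext (by simp [mul_assoc]) ?_
      change ε + _ + _ = ε
      rw [conj_simple_eq_simple_iff, add_assoc, CharTwo.add_self_eq_zero, add_zero]

theorem prod_map_parityGen_apply (ω : List B) (t : W) (ε : ZMod 2) :
    (ω.map (parityGen cs)).prod (t, ε) =
      (π ω * t * (π ω)⁻¹, ε + (lis ω).count (π ω * t * (π ω)⁻¹)) := by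
  induction ω with
  | nil => simp
  | cons i ω ih =>
    have hconj : π (i :: ω) * t * (π (i :: ω))⁻¹ = MulAut.conj (s i) (π ω * t * (π ω)⁻¹) := by
      simp [wordProd_cons, mul_assoc]
    rw [hconj, map_cons, prod_cons, Equiv.Perm.mul_apply, ih, leftInvSeq, count_cons,
      count_map_of_injective _ _ (MulAut.conj (s i)).injective]
    simp only [beq_iff_eq, eq_comm (a := s i), conj_simple_eq_simple_iff]
    push_cast
    rw [← add_assoc]
    rfl

/-- `(s i * s j) ^ M i j` acts trivially: the braid word has product `1`, and every reflection
occurs an even number of times in its left inversion sequence. -/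
theorem isLiftable_parityGen : M.IsLiftable (parityGen cs) := by
  intro i j
  obtain ⟨L, hL⟩ := exists_leftInvSeq_alternatingWord_eq_append_self cs i j
  have hπ : π (alternatingWord i j (2 * M i j)) = 1 := by
    simp [prod_alternatingWord_eq_mul_pow]
  refine Equiv.ext fun ⟨t, ε⟩ => ?_
  rw [← prod_map_alternatingWord_two_mul, prod_map_parityGen_apply, hπ, hL]
  simp [CharTwo.add_self_eq_zero]

noncomputable def parityRep : W →* Equiv.Perm (W × ZMod 2) :=
  cs.lift ⟨parityGen cs, isLiftable_parityGen cs⟩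

theorem parityRep_wordProd (ω : List B) : parityRep cs (π ω) = (ω.map (parityGen cs)).prod := by
  simp [wordProd, parityRep, map_list_prod, Function.comp_def, lift_apply_simple]

/-- `inversionParity w t` is `1` exactly when `t` is a right inversion of `w`. -/
noncomputable def inversionParity (w t : W) : ZMod 2 := (parityRep cs w (t, 0)).2

theorem inversionParity_wordProd (ω : List B) (t : W) :
    inversionParity cs (π ω) t = (lis ω).count (π ω * t * (π ω)⁻¹) := by
  simp [inversionParity, parityRep_wordProd, prod_map_parityGen_apply]

theorem parityRep_apply (w t : W) (ε : ZMod 2) :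
    parityRep cs w (t, ε) = (w * t * w⁻¹, ε + inversionParity cs w t) := by
  obtain ⟨ω, rfl⟩ := cs.wordProd_surjective w
  rw [parityRep_wordProd, prod_map_parityGen_apply, inversionParity_wordProd]

theorem inversionParity_mul (a b t : W) :
    inversionParity cs (a * b) t = inversionParity cs b t + inversionParity cs a (b * t * b⁻¹) := by
  rw [inversionParity, map_mul, Equiv.Perm.mul_apply, parityRep_apply, parityRep_apply, zero_add]

theorem inversionParity_one (t : W) : inversionParity cs 1 t = 0 := by
  simp [inversionParity]

theorem inversionParity_eq_zero_of_length_lt {w t : W} (h : ℓ w < ℓ (w * t)) :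
    inversionParity cs w t = 0 := by
  obtain ⟨ω, hω, rfl⟩ := cs.exists_isReduced w
  rw [inversionParity_wordProd, count_eq_zero.2 fun hmem => ?_, Nat.cast_zero]
  have := (cs.isLeftInversion_of_mem_leftInvSeq hω hmem).2
  rw [show π ω * t * (π ω)⁻¹ * π ω = π ω * t by group] at this
  omega

theorem inversionParity_self {t : W} (ht : cs.IsReflection t) : inversionParity cs t t = 1 := by
  obtain ⟨z, i, rfl⟩ := ht
  have hsimple : inversionParity cs (s i) (s i) = 1 := by
    simpa using inversionParity_wordProd cs [i] (s i)
  have hone := inversionParity_mul cs z z⁻¹ (z * s i * z⁻¹)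
  have hmul := inversionParity_mul cs (z * s i) z⁻¹ (z * s i * z⁻¹)
  have hmul' := inversionParity_mul cs z (s i) (s i)
  simp only [mul_inv_cancel, inv_inv, show z⁻¹ * (z * s i * z⁻¹) * z = s i by group,
    simple_mul_simple_cancel_right, inv_simple, hsimple] at hone hmul hmul'
  rw [inversionParity_one] at hone
  rw [hmul, hmul']
  linear_combination -hone

theorem inversionParity_eq_one_of_length_mul_lt {w t : W} (ht : cs.IsReflection t)
    (h : ℓ (w * t) < ℓ w) : inversionParity cs w t = 1 := by
  have hwtt : w * t * t = w := by rw [mul_assoc, ht.mul_self, mul_one]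
  have hwt := inversionParity_mul cs (w * t) t t
  rw [hwtt, ht.mul_self, one_mul, ht.inv, inversionParity_self cs ht,
    inversionParity_eq_zero_of_length_lt cs (w := w * t) (by rwa [hwtt]), add_zero] at hwt
  exact hwt

/-- The strong exchange property. -/
theorem exists_wordProd_eraseIdx_eq_mul (ω : List B) {t : W} (ht : cs.IsReflection t)
    (h : ℓ (π ω * t) < ℓ (π ω)) : ∃ j < ω.length, π (ω.eraseIdx j) = π ω * t := by
  have hmem : π ω * t * (π ω)⁻¹ ∈ lis ω := by
    by_contra hnot
    have hcount := inversionParity_eq_one_of_length_mul_lt cs ht h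
    rw [inversionParity_wordProd, count_eq_zero.2 hnot] at hcount
    simp at hcount
  obtain ⟨j, hj, hget⟩ := getElem_of_mem hmem
  refine ⟨j, by simpa using hj, ?_⟩
  rw [← getD_leftInvSeq_mul_wordProd, getD_eq_getElem _ _ hj, hget]
  group

end ParityRepresentation

section BruhatOrder

def BruhatStep (a b : W) : Prop := ∃ t, cs.IsReflection t ∧ b = a * t ∧ ℓ a < ℓ b

def BruhatChain : W → W → Prop := Relation.ReflTransGen (BruhatStep cs)

variable {cs}

theorem BruhatStep.of_length_lt_mul_simple {w : W} {i : B} (h : ℓ w < ℓ (w * s i)) :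
    BruhatStep cs w (w * s i) :=
  ⟨s i, cs.isReflection_simple i, rfl, h⟩

theorem BruhatChain.length_le {u w : W} (h : BruhatChain cs u w) : ℓ u ≤ ℓ w := by
  induction h with
  | refl => rfl
  | tail _ hstep _ => obtain ⟨t, -, -, hlt⟩ := hstep; omega

theorem BruhatChain.eq_of_length_le {u w : W} (h : BruhatChain cs u w) (hlen : ℓ w ≤ ℓ u) :
    u = w := by
  induction h with
  | refl => rfl
  | tail hrest hstep _ =>
    obtain ⟨t, -, -, hlt⟩ := hstep
    have := BruhatChain.length_le hrest
    omega

theorem BruhatChain.exists_sublist_wordProd_eq {u w : W} (h : BruhatChain cs u w) (ω : List B)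
    (hω : π ω = w) : ∃ ω' : List B, ω'.Sublist ω ∧ π ω' = u := by
  induction h using Relation.ReflTransGen.head_induction_on with
  | refl => exact ⟨ω, Sublist.refl ω, hω⟩
  | @head a _ hstep _ ih =>
    obtain ⟨ω', hsub, rfl⟩ := ih
    obtain ⟨t, ht, hc, hlt⟩ := hstep
    have ha : π ω' * t = a := by rw [hc, mul_assoc, ht.mul_self, mul_one]
    obtain ⟨j, -, hj⟩ := cs.exists_wordProd_eraseIdx_eq_mul ω' ht (by rwa [ha])
    exact ⟨ω'.eraseIdx j, (eraseIdx_sublist ω' j).trans hsub, hj.trans ha⟩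

theorem exists_isReduced_append_singleton {w : W} {i : B} (h : ℓ (w * s i) < ℓ w) :
    ∃ r : List B, cs.IsReduced (r ++ [i]) ∧ π (r ++ [i]) = w := by
  obtain ⟨r, hr, hrw⟩ := cs.exists_isReduced (w * s i)
  have hprod : π (r ++ [i]) = w := by
    rw [wordProd_append, wordProd_singleton, ← hrw, simple_mul_simple_cancel_right]
  refine ⟨r, ?_, hprod⟩
  have := cs.length_mul_simple w i
  rw [IsReduced, hprod, length_append, length_singleton, ← hr.eq, ← hrw]
  omega

/-- Exchange `t` against a reduced word of `a * t` ending in `i`: removing any letter but the last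
would give `ℓ (a * s i) < ℓ a`. -/
theorem IsReflection.eq_simple_of_length_mul_simple_lt {a t : W} {i : B}
    (ht : cs.IsReflection t) (hat : ℓ a < ℓ (a * t)) (hs : ℓ (a * t * s i) < ℓ (a * s i)) :
    t = s i := by
  have ha := cs.length_mul_simple a i
  have hc := cs.length_mul_simple (a * t) i
  obtain ⟨r, hr, hrc⟩ := exists_isReduced_append_singleton (cs := cs) (w := a * t) (i := i)
    (by omega)
  have hct : a * t * t = a := by rw [mul_assoc, ht.mul_self, mul_one]
  obtain ⟨j, hj, hjr⟩ :=
    cs.exists_wordProd_eraseIdx_eq_mul (r ++ [i]) ht (by rw [hrc, hct]; omega)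
  rw [hrc, hct] at hjr
  have hrlen : r.length + 1 = ℓ (a * t) := by rw [← hrc, hr.eq, length_append, length_singleton]
  rw [length_append, length_singleton] at hj
  rcases Nat.lt_or_ge j r.length with hjlt | hjge
  · rw [eraseIdx_append_of_lt_length hjlt, wordProd_append, wordProd_singleton] at hjr
    have hshort := cs.length_wordProd_le (r.eraseIdx j)
    rw [length_eraseIdx_of_lt hjlt, ← simple_mul_simple_cancel_right cs (w := π (r.eraseIdx j)) i,
      hjr] at hshort
    omega
  · rw [show j = r.length by omega, eraseIdx_append_of_length_le le_rfl] at hjr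
    simp only [Nat.sub_self, eraseIdx_cons_zero, append_nil] at hjr
    rw [wordProd_append, wordProd_singleton, hjr] at hrc
    exact (mul_left_cancel hrc).symm

theorem BruhatChain.mul_simple {u w : W} {i : B} (h : BruhatChain cs u w)
    (hw : ℓ w < ℓ (w * s i)) : BruhatChain cs (u * s i) (w * s i) := by
  induction h using Relation.ReflTransGen.head_induction_on with
  | refl => exact .refl
  | @head a c hstep hrest ih =>
    obtain ⟨t, ht, rfl, hlt⟩ := hstep
    have hconj : a * s i * (s i * t * s i) = a * t * s i := by simp [mul_assoc]
    have ht' : cs.IsReflection (s i * t * s i) := by simpa using ht.conj (s i)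
    rcases lt_trichotomy (ℓ (a * s i)) (ℓ (a * t * s i)) with hlt' | heq | hgt
    · exact .head ⟨_, ht', hconj.symm, hlt'⟩ ih
    · exact absurd (hconj ▸ heq.symm) (ht'.length_mul_left_ne _)
    · rw [ht.eq_simple_of_length_mul_simple_lt hlt hgt] at hrest
      exact hrest.tail (.of_length_lt_mul_simple hw)

theorem BruhatChain.of_sublist {ω l : List B} (hω : cs.IsReduced ω) (hl : l.Sublist ω) :
    BruhatChain cs (π l) (π ω) := by
  induction ω using reverseRecOn generalizing l with
  | nil => rw [sublist_nil.1 hl]; exact .refl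
  | append_singleton ω i ih =>
    have hω' : cs.IsReduced ω := by simpa using hω.take ω.length
    have hasc : ℓ (π ω) < ℓ (π ω * s i) := by
      have := hω.eq
      rw [wordProd_append, wordProd_singleton, length_append, length_singleton, ← hω'.eq] at this
      omega
    obtain ⟨l₁, l₂, rfl, hl₁, hl₂⟩ := sublist_append_iff.1 hl
    rcases sublist_singleton.1 hl₂ with rfl | rfl
    · rw [append_nil, wordProd_append, wordProd_singleton]
      exact (ih hω' hl₁).tail (.of_length_lt_mul_simple hasc)
    · rw [wordProd_append, wordProd_append, wordProd_singleton]
      exact (ih hω' hl₁).mul_simple hasc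

theorem BruhatChain.mul_simple_of_length_mul_simple_lt {u w : W} {i : B}
    (h : BruhatChain cs u w) (hw : ℓ (w * s i) < ℓ w) : BruhatChain cs (u * s i) w := by
  obtain ⟨r, hr, rfl⟩ := exists_isReduced_append_singleton hw
  obtain ⟨l, hl, rfl⟩ := h.exists_sublist_wordProd_eq (r ++ [i]) rfl
  obtain ⟨l₁, l₂, rfl, hl₁, hl₂⟩ := sublist_append_iff.1 hl
  rcases sublist_singleton.1 hl₂ with rfl | rfl
  · simpa only [append_nil, wordProd_append, wordProd_singleton] using
      of_sublist hr (hl₁.append_right [i])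
  · simpa only [wordProd_append, wordProd_singleton, simple_mul_simple_cancel_right] using
      of_sublist hr (hl₁.trans (sublist_append_left r [i]))

theorem bruhatLE_iff_bruhatChain {u w : W} : bruhatLE cs u w ↔ BruhatChain cs u w := by
  constructor
  · rintro ⟨l, hl, rfl, l', hl', rfl⟩
    exact .of_sublist hl hl'
  · intro h
    obtain ⟨ω, hω, rfl⟩ := cs.exists_isReduced w
    obtain ⟨ω', hω', rfl⟩ := h.exists_sublist_wordProd_eq ω rfl
    exact ⟨ω, hω, rfl, ω', hω', rfl⟩

theorem bruhatLE_refl (w : W) : bruhatLE cs w w := bruhatLE_iff_bruhatChain.2 .refl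

theorem bruhatLE_inv {u w : W} (h : bruhatLE cs u w) : bruhatLE cs u⁻¹ w⁻¹ := by
  obtain ⟨l, hl, rfl, l', hl', rfl⟩ := h
  exact ⟨l.reverse, (cs.isReduced_reverse_iff l).2 hl, wordProd_reverse cs l, l'.reverse,
    hl'.reverse, wordProd_reverse cs l'⟩

theorem bruhatLE_inv_comm {u w : W} : bruhatLE cs u⁻¹ w ↔ bruhatLE cs u w⁻¹ :=
  ⟨fun h => by simpa using bruhatLE_inv h, fun h => by simpa using bruhatLE_inv h⟩

end BruhatOrder

section DemazureProduct

/-- The Demazure product `w ⋆ s i`. -/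
noncomputable def demazureMulSimple (w : W) (i : B) : W :=
  if ℓ w < ℓ (w * s i) then w * s i else w

noncomputable def demazureFold (w : W) (ω : List B) : W := ω.foldl (demazureMulSimple cs) w

structure IsDemazureProduct (x y m : W) : Prop where
  mem : ∃ u v : W, bruhatLE cs u x ∧ bruhatLE cs v y ∧ m = u * v
  le : ∀ z : W, (∃ u v : W, bruhatLE cs u x ∧ bruhatLE cs v y ∧ z = u * v) → bruhatLE cs z m

variable {cs}

theorem demazureFold_cons (w : W) (i : B) (ω : List B) :
    demazureFold cs w (i :: ω) = demazureFold cs (demazureMulSimple cs w i) ω :=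
  rfl

theorem exists_sublist_demazureFold_eq (w : W) (ω : List B) :
    ∃ l : List B, l.Sublist ω ∧ demazureFold cs w ω = w * π l ∧
      ℓ (demazureFold cs w ω) = ℓ w + l.length := by
  induction ω generalizing w with
  | nil => exact ⟨[], .slnil, by simp [demazureFold], by simp [demazureFold]⟩
  | cons i ω ih =>
    rw [demazureFold_cons, demazureMulSimple]
    split_ifs with hw
    · obtain ⟨l, hl, heq, hlen⟩ := ih (w * s i)
      refine ⟨i :: l, hl.cons_cons i, by rw [heq, wordProd_cons, mul_assoc], ?_⟩
      have := cs.length_mul_simple w i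
      rw [hlen, length_cons]
      omega
    · obtain ⟨l, hl, heq, hlen⟩ := ih w
      exact ⟨l, hl.cons i, heq, hlen⟩

theorem BruhatChain.demazureMulSimple {u w : W} (h : BruhatChain cs u w) (i : B) :
    BruhatChain cs u (demazureMulSimple cs w i) ∧
      BruhatChain cs (u * s i) (demazureMulSimple cs w i) := by
  rw [CoxeterSystem.demazureMulSimple]
  split_ifs with hw
  · exact ⟨h.tail (.of_length_lt_mul_simple hw), h.mul_simple hw⟩
  · exact ⟨h, h.mul_simple_of_length_mul_simple_lt
      (lt_of_le_of_ne (not_lt.1 hw) (cs.length_mul_simple_ne w i))⟩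

theorem BruhatChain.mul_wordProd_demazureFold {u w : W} (h : BruhatChain cs u w) {ω l : List B}
    (hl : l.Sublist ω) : BruhatChain cs (u * π l) (demazureFold cs w ω) := by
  induction ω generalizing u w l with
  | nil => rw [sublist_nil.1 hl, wordProd_nil, mul_one]; exact h
  | cons i ω ih =>
    rw [demazureFold_cons]
    rcases sublist_cons_iff.1 hl with hl | ⟨l', rfl, hl'⟩
    · exact ih (h.demazureMulSimple i).1 hl
    · rw [wordProd_cons, ← mul_assoc]
      exact ih (h.demazureMulSimple i).2 hl'

theorem IsDemazureProduct.exists_eq_mul_right {x y m : W} (h : cs.IsDemazureProduct x y m) :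
    ∃ v : W, bruhatLE cs v y ∧ m = x * v ∧ ℓ m = ℓ x + ℓ v := by
  obtain ⟨u, _, hu, ⟨ω, hω, rfl, l, hl, rfl⟩, rfl⟩ := h.mem
  obtain ⟨l', hl', hfold, hlen⟩ := exists_sublist_demazureFold_eq (cs := cs) x ω
  have hl'y : bruhatLE cs (π l') (π ω) := ⟨ω, hω, rfl, l', hl', rfl⟩
  have hfold_le : BruhatChain cs (demazureFold cs x ω) (u * π l) :=
    bruhatLE_iff_bruhatChain.1 (h.le _ ⟨x, π l', bruhatLE_refl x, hl'y, hfold⟩)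
  have hle_fold : BruhatChain cs (u * π l) (demazureFold cs x ω) :=
    (bruhatLE_iff_bruhatChain.1 hu).mul_wordProd_demazureFold hl
  have heq := hfold_le.eq_of_length_le hle_fold.length_le
  refine ⟨π l', hl'y, heq ▸ hfold, ?_⟩
  have := cs.length_wordProd_le l'
  have := cs.length_mul_le x (π l')
  rw [← heq, hlen]
  rw [← hfold, hlen] at this
  omega

theorem IsDemazureProduct.inv {x y m : W} (h : cs.IsDemazureProduct x y m) :
    cs.IsDemazureProduct y⁻¹ x⁻¹ m⁻¹ where
  mem := by
    obtain ⟨u, v, hu, hv, rfl⟩ := h.mem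
    exact ⟨v⁻¹, u⁻¹, bruhatLE_inv hv, bruhatLE_inv hu, mul_inv_rev u v⟩
  le := by
    rintro _ ⟨v, u, hv, hu, rfl⟩
    have := h.le _ ⟨u⁻¹, v⁻¹, bruhatLE_inv_comm.2 hu, bruhatLE_inv_comm.2 hv, rfl⟩
    simpa using bruhatLE_inv this

theorem IsDemazureProduct.exists_eq_mul_left {x y m : W} (h : cs.IsDemazureProduct x y m) :
    ∃ u : W, bruhatLE cs u x ∧ m = u * y ∧ ℓ m = ℓ u + ℓ y := by
  obtain ⟨u, hu, hm, hlen⟩ := h.inv.exists_eq_mul_right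
  refine ⟨u⁻¹, bruhatLE_inv_comm.2 hu, by rw [← inv_inv m, hm, mul_inv_rev, inv_inv], ?_⟩
  simpa [add_comm] using hlen

end DemazureProduct

end CoxeterSystem

/-- The Demazure product `x * y` (the unique maximal element `m` of
`{uv : u ≤ x, v ≤ y}`) can be written as `u' * y` with `u' ≤ x` and
`ℓ(x * y) = ℓ(u') + ℓ(y)`, and as `x * v'` with `v' ≤ y` and
`ℓ(x * y) = ℓ(x) + ℓ(v')`. -/
theorem demazure_product_decompositions {B W : Type*} [Group W] {M : CoxeterMatrix B}
    (cs : CoxeterSystem M W) (x y m : W)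
    (hmem : ∃ u v : W, bruhatLE cs u x ∧ bruhatLE cs v y ∧ m = u * v)
    (hmax : ∀ z : W, (∃ u v : W, bruhatLE cs u x ∧ bruhatLE cs v y ∧ z = u * v) →
      bruhatLE cs z m) :
    (∃ u' : W, bruhatLE cs u' x ∧ m = u' * y ∧
      cs.length m = cs.length u' + cs.length y) ∧
    (∃ v' : W, bruhatLE cs v' y ∧ m = x * v' ∧
      cs.length m = cs.length x + cs.length v') := by
  have h : cs.IsDemazureProduct x y m := ⟨hmem, hmax⟩
  exact ⟨h.exists_eq_mul_left, h.exists_eq_mul_right⟩
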